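/- arXiv:1901.04981 — 3 statements merged into one kernel-verified Lean document; each statement's English description precedes it below -/
import Mathlib

section
/- For all natural numbers n and m with m ≥ 1, the generalized Catalan number C_{m,n} = (m+n choose n)^{-1} · ((m+1)n)! / (n!)^{m+1} is an integer. -/
/-!
By Legendre's formula, `∏ aᵢ! ∣ ∏ bⱼ!` as soon as `∑ ⌊aᵢ/q⌋ ≤ ∑ ⌊bⱼ/q⌋` for every `q > 0`
(Landau's criterion). Clearing denominators, `C_{m,n}` is an integer iff
`(m+n)! · (n!)^m ∣ ((m+1)n)! · m!`, and the corresponding floor inequality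
`⌊(m+n)/q⌋ + m⌊n/q⌋ ≤ ⌊(m+1)n/q⌋ + ⌊m/q⌋` reduces, after writing `n = qk + r`, to
`⌊(m+r)/q⌋ ≤ ⌊(m+1)r/q⌋ + ⌊m/q⌋`, which holds because `m + r ≤ (m+1)r` when `r ≠ 0`.
-/

open Finset Nat

namespace Nat

theorem add_div_add_mul_div_le (m n q : ℕ) :
    (m + n) / q + m * (n / q) ≤ (m + 1) * n / q + m / q := by
  rcases Nat.eq_zero_or_pos q with rfl | hq
  · simp
  set k := n / q
  set r := n % q
  have hn : n = r + q * k := (Nat.mod_add_div n q).symm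
  have h_left : (m + n) / q = (m + r) / q + k := by
    rw [hn, ← add_assoc, Nat.add_mul_div_left _ _ hq]
  have h_right : (m + 1) * n / q = (m + 1) * r / q + (m + 1) * k := by
    rw [hn, mul_add, mul_left_comm, Nat.add_mul_div_left _ _ hq]
  have h_rem : (m + r) / q ≤ (m + 1) * r / q + m / q := by
    rcases Nat.eq_zero_or_pos r with hr | hr
    · simp [hr]
    · calc (m + r) / q ≤ (m + 1) * r / q := Nat.div_le_div_right (by nlinarith)
        _ ≤ (m + 1) * r / q + m / q := Nat.le_add_right _ _
  rw [h_left, h_right]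
  nlinarith

theorem factorization_prod_factorial (s : Multiset ℕ) (p : ℕ) :
    (s.map factorial).prod.factorization p = (s.map fun a => (a !).factorization p).sum := by
  induction s using Multiset.induction_on with
  | empty => simp
  | cons a s ih =>
    rw [Multiset.map_cons, Multiset.prod_cons, factorization_mul (factorial_ne_zero a)
      (Multiset.prod_ne_zero (by simp [factorial_ne_zero])), Finsupp.add_apply, ih]
    simp

theorem prod_factorial_dvd_prod_factorial_of_sum_div_le {s t : Multiset ℕ}
    (h : ∀ q, 0 < q → (s.map (· / q)).sum ≤ (t.map (· / q)).sum) :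
    (s.map factorial).prod ∣ (t.map factorial).prod := by
  have prod_ne_zero (u : Multiset ℕ) : (u.map factorial).prod ≠ 0 :=
    Multiset.prod_ne_zero (by simp [factorial_ne_zero])
  rw [← factorization_prime_le_iff_dvd (prod_ne_zero s) (prod_ne_zero t)]
  intro p hp
  set b := (s + t).sum + 1
  have legendre (u : Multiset ℕ) (hu : u ≤ s + t) :
      (u.map factorial).prod.factorization p = ∑ i ∈ Ico 1 b, (u.map (· / p ^ i)).sum := by
    rw [factorization_prod_factorial, ← Multiset.sum_map_sum]
    refine congrArg Multiset.sum (Multiset.map_congr rfl fun a ha => ?_)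
    refine factorization_factorial hp ((log_le_self p a).trans_lt (Nat.lt_succ_of_le ?_))
    exact Multiset.le_sum_of_mem (Multiset.mem_of_le hu ha)
  rw [legendre s (Multiset.le_add_right s t), legendre t (Multiset.le_add_left t s)]
  exact sum_le_sum fun i _ => h _ (pow_pos hp.pos i)

end Nat

theorem generalized_catalan_integer_general (m n : ℕ) :
    ((m + n).choose n) ∣ Nat.multinomial (Finset.range (m + 1)) (fun _ => n) := by
  have h_choose : (m + n).choose n * (m ! * n !) = (m + n)! := by
    rw [← mul_assoc, add_choose_mul_factorial_mul_factorial]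
  have h_multinomial :
      Nat.multinomial (range (m + 1)) (fun _ => n) * n ! ^ (m + 1) = ((m + 1) * n)! := by
    simpa [mul_comm] using multinomial_spec (range (m + 1)) (fun _ => n)
  have h_factorials : (m + n)! * n ! ^ m ∣ ((m + 1) * n)! * m ! := by
    simpa [mul_comm] using
      prod_factorial_dvd_prod_factorial_of_sum_div_le (s := (m + n) ::ₘ .replicate m n)
        (t := {(m + 1) * n, m}) fun q _ => by simpa using add_div_add_mul_div_le m n q
  refine Nat.dvd_of_mul_dvd_mul_right (by positivity : 0 < m ! * n ! ^ (m + 1)) ?_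
  convert h_factorials using 1
  · rw [← h_choose]; ring
  · rw [← h_multinomial]; ring

/-- The generalized Catalan number `C_{m,n} = multinomial((m+1)n; n,…,n) / binom(m+n, n)`
(with `m+1` blocks of size `n`) is an integer, i.e. `binom(m+n,n)` divides the multinomial
coefficient. -/
theorem generalized_catalan_integer (m n : ℕ) (hm : 1 ≤ m) :
    ((m + n).choose n) ∣ Nat.multinomial (Finset.range (m + 1)) (fun _ => n) :=
  generalized_catalan_integer_general m n
end

section
/- For every prime p, every i ≥ 1, and all natural numbers n, m with m ≥ 1, the quantity ⌊(m+1)n/p^i⌋ − (m+1)⌊n/p^i⌋ − ⌊(m+n)/p^i⌋ + ⌊n/p^i⌋ + ⌊m/p^i⌋ is nonnegative. -/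
/-!
With `q = p ^ i`, write `n = q a + r` and `m = q b + s` with `r, s < q`; every term except two is linear in
`a` and `b`, so the summand reduces to `⌊(m + 1) r / q⌋ - ⌊(s + r) / q⌋`. This is nonnegative:
if `r = 0` both floors vanish, and otherwise `s + r ≤ m + r ≤ (m + 1) r`.
-/

namespace Nat

theorem add_mod_div_le_succ_mul_mod_div (q m n : ℕ) :
    (m % q + n % q) / q ≤ (m + 1) * (n % q) / q := by
  rcases Nat.eq_zero_or_pos (n % q) with hr | hr
  · simp [hr, Nat.mod_div_self]
  · refine Nat.div_le_div_right ?_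
    have := Nat.mod_le m q
    nlinarith

theorem mul_div_eq_mul_div_add_mul_mod_div (q k n : ℕ) (hq : 0 < q) :
    k * n / q = k * (n / q) + k * (n % q) / q := by
  conv_lhs => rw [← Nat.div_add_mod n q, Nat.mul_add, Nat.mul_left_comm, Nat.mul_add_div hq]

theorem add_div_eq_div_add_div_add_mod_div (q m n : ℕ) (hq : 0 < q) :
    (m + n) / q = m / q + n / q + (m % q + n % q) / q := by
  conv_lhs => rw [← Nat.div_add_mod m q, ← Nat.div_add_mod n q,
    show q * (m / q) + m % q + (q * (n / q) + n % q) = q * (m / q + n / q) + (m % q + n % q) by ring,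
    Nat.mul_add_div hq]

theorem succ_mul_div_add_add_div_le (q m n : ℕ) :
    (m + 1) * (n / q) + (m + n) / q ≤ (m + 1) * n / q + n / q + m / q := by
  rcases Nat.eq_zero_or_pos q with rfl | hq
  · simp
  rw [mul_div_eq_mul_div_add_mul_mod_div q (m + 1) n hq, add_div_eq_div_add_div_add_mod_div q m n hq]
  have := add_mod_div_le_succ_mul_mod_div q m n
  omega

end Nat

theorem legendre_summand_nonneg_general (p : ℕ) (i : ℕ)
    (n m : ℕ) :
    0 ≤ ⌊(((m + 1) * n : ℕ) : ℚ) / (p : ℚ) ^ i⌋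
        - (m + 1 : ℤ) * ⌊((n : ℚ)) / (p : ℚ) ^ i⌋
        - ⌊(((m + n : ℕ)) : ℚ) / (p : ℚ) ^ i⌋
        + ⌊((n : ℚ)) / (p : ℚ) ^ i⌋
        + ⌊((m : ℚ)) / (p : ℚ) ^ i⌋ := by
  rw [← Nat.cast_pow]
  simp only [Rat.floor_natCast_div_natCast]
  have := Nat.succ_mul_div_add_add_div_le (p ^ i) m n
  zify at this
  push_cast
  linarith

/-- For every prime `p`, every `i ≥ 1` and all `n, m` with `m ≥ 1`, the summand
`⌊(m+1)n/p^i⌋ − (m+1)⌊n/p^i⌋ − ⌊(m+n)/p^i⌋ + ⌊n/p^i⌋ + ⌊m/p^i⌋` is nonnegative. -/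
theorem legendre_summand_nonneg (p : ℕ) (hp : p.Prime) (i : ℕ) (hi : 1 ≤ i)
    (n m : ℕ) (hm : 1 ≤ m) :
    0 ≤ ⌊(((m + 1) * n : ℕ) : ℚ) / (p : ℚ) ^ i⌋
        - (m + 1 : ℤ) * ⌊((n : ℚ)) / (p : ℚ) ^ i⌋
        - ⌊(((m + n : ℕ)) : ℚ) / (p : ℚ) ^ i⌋
        + ⌊((n : ℚ)) / (p : ℚ) ^ i⌋
        + ⌊((m : ℚ)) / (p : ℚ) ^ i⌋ :=
  legendre_summand_nonneg_general p i n m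
end

section
/- The generating function B(x,1) of rooted planar maps by edges satisfies B(x,1) = Σ_{e≥0} (2·3^e / ((e+1)(e+2))) · binom(2e, e) · x^e = −(1/(54x²))·(1 − 18x − (1−12x)^{3/2}) as formal power series. -/
/-!
Write `B` for the series of Tutte's numbers. Both `T = 1 - 18X + 54X²B` and `U = (1 - 12X)S`
solve `(1 - 12X) f' = -18 f`: for `U` this comes from differentiating `S² = 1 - 12X`, for `T` it
is, coefficientwise, the recurrence `(e + 3) b_{e+1} = 6 (2e + 1) b_e` of the central binomial
coefficients. In coefficients the equation reads `(n + 1) f_{n+1} = (12n - 18) f_n`, which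
determines `f` from `f_0 = 1`; hence `T = U`.
-/

open PowerSeries

namespace PowerSeries

variable {R : Type*}

@[simp]
theorem coeff_ofNat_mul [Semiring R] (k n : ℕ) [k.AtLeastTwo] (φ : R⟦X⟧) :
    coeff n ((ofNat(k) : R⟦X⟧) * φ) = ofNat(k) * coeff n φ := by
  rw [← map_ofNat C, coeff_C_mul]

instance [CommSemiring R] [CharZero R] : CharZero R⟦X⟧ :=
  charZero_of_injective_algebraMap (C_injective (R := R))

theorem two_mul_mul_derivative_mul_of_sq_eq [CommRing R] {S p : R⟦X⟧} (h : S ^ 2 = p) :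
    2 * (p * d⁄dX R (p * S)) = 3 * d⁄dX R p * (p * S) := by
  have hS : 2 * (p * d⁄dX R S) = S * d⁄dX R p := by
    rw [← h, Derivation.leibniz_pow]
    simp only [nsmul_eq_mul, smul_eq_mul]
    ring
  rw [Derivation.leibniz, smul_eq_mul, smul_eq_mul]
  linear_combination p * hS

theorem coeff_succ_of_one_sub_mul_X_mul_derivative [CommRing R] {a c : R} {f : R⟦X⟧}
    (h : (1 - C a * X) * d⁄dX R f = C c * f) (n : ℕ) :
    (n + 1) * coeff (n + 1) f = (a * n + c) * coeff n f := by
  have hn := congrArg (coeff n) h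
  rw [sub_mul, one_mul, mul_assoc, map_sub, coeff_C_mul, coeff_C_mul, coeff_derivative] at hn
  cases n with
  | zero =>
    rw [coeff_zero_X_mul] at hn
    push_cast
    linear_combination hn
  | succ m =>
    rw [coeff_succ_X_mul, coeff_derivative] at hn
    push_cast at hn ⊢
    linear_combination hn

theorem eq_of_coeff_succ_recurrence [CommRing R] [IsDomain R] [CharZero R] (r : ℕ → R)
    {f g : R⟦X⟧} (hf : ∀ n, (n + 1) * coeff (n + 1) f = r n * coeff n f)
    (hg : ∀ n, (n + 1) * coeff (n + 1) g = r n * coeff n g)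
    (h0 : constantCoeff f = constantCoeff g) : f = g := by
  ext n
  induction n with
  | zero => simpa using h0
  | succ m ih =>
    refine mul_left_cancel₀ (Nat.cast_add_one_ne_zero m) ?_
    rw [hf, hg, ih]

end PowerSeries

def rootedMapCount (e : ℕ) : ℚ :=
  (2 * 3 ^ e * (2 * e).choose e : ℚ) / ((e + 1) * (e + 2))

theorem rootedMapCount_zero : rootedMapCount 0 = 1 := by
  norm_num [rootedMapCount]

theorem rootedMapCount_succ (m : ℕ) :
    (m + 3) * rootedMapCount (m + 1) = 6 * (2 * m + 1) * rootedMapCount m := by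
  have h : ((m : ℚ) + 1) * (m + 1).centralBinom = 2 * (2 * m + 1) * m.centralBinom := by
    exact_mod_cast Nat.succ_mul_centralBinom_succ m
  simp only [rootedMapCount, ← Nat.centralBinom_eq_two_mul_choose]
  field_simp
  push_cast
  linear_combination 3 * 3 ^ m * ((m : ℚ) + 2) * (m + 3) * h

theorem coeff_succ_one_sub_eighteen_X_add_rootedMapCount (n : ℕ) :
    (n + 1) * coeff (n + 1) (1 - 18 * X + 54 * X ^ 2 * mk rootedMapCount : ℚ⟦X⟧)
      = (12 * n - 18) * coeff n (1 - 18 * X + 54 * X ^ 2 * mk rootedMapCount : ℚ⟦X⟧) := by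
  have coeff_add_two (m : ℕ) :
      coeff (m + 2) (1 - 18 * X + 54 * X ^ 2 * mk rootedMapCount : ℚ⟦X⟧) = 54 * rootedMapCount m := by
    simp [coeff_X_pow_mul', mul_assoc, coeff_X]
  rcases n with _ | _ | m
  · simp [coeff_X_pow_mul', mul_assoc]
  · rw [coeff_add_two, rootedMapCount_zero]
    norm_num [coeff_X_pow_mul', mul_assoc]
  · rw [coeff_add_two, coeff_add_two]
    push_cast
    linear_combination 54 * rootedMapCount_succ m

/-- The generating function `B(x,1)` of rooted planar maps by edges, whose coefficient of
`x^e` is `2·3^e·binom(2e,e)/((e+1)(e+2))` (Tutte's formula), satisfies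
`B(x,1) = −(1/(54x²))·(1 − 18x − (1−12x)^{3/2})` as a formal power series identity;
here `(1−12x)^{3/2}` means `(1−12x)·S` for the formal square root `S` of `1−12x`
with constant term `1`, and the identity is written multiplied through by `54x²`. -/
theorem map_generating_function_closed_form
    (S : PowerSeries ℚ) (hS0 : PowerSeries.constantCoeff S = 1)
    (hS : S ^ 2 = 1 - 12 * PowerSeries.X) :
    54 * PowerSeries.X ^ 2 *
        (PowerSeries.mk fun e : ℕ =>
          (2 * 3 ^ e * (2 * e).choose e : ℚ) / ((e + 1) * (e + 2))) =
      -(1 - 18 * PowerSeries.X - (1 - 12 * PowerSeries.X) * S) := by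
  have hode : (1 - C 12 * X) * d⁄dX ℚ ((1 - 12 * X) * S) = C (-18) * ((1 - 12 * X) * S) := by
    have h := two_mul_mul_derivative_mul_of_sq_eq hS
    have hp : d⁄dX ℚ (1 - 12 * X : ℚ⟦X⟧) = -12 := by
      have h12 : d⁄dX ℚ (12 : ℚ⟦X⟧) = 0 := by exact_mod_cast (d⁄dX ℚ).map_natCast 12
      simp [h12]
    rw [hp] at h
    refine mul_left_cancel₀ two_ne_zero ?_
    simp only [map_neg, map_ofNat]
    linear_combination h
  have hTU : 1 - 18 * X + 54 * X ^ 2 * mk rootedMapCount = (1 - 12 * X) * S :=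
    eq_of_coeff_succ_recurrence (fun n : ℕ => (12 * n - 18 : ℚ))
      coeff_succ_one_sub_eighteen_X_add_rootedMapCount
      (fun n => by rw [coeff_succ_of_one_sub_mul_X_mul_derivative hode]; ring)
      (by simp [hS0])
  change 54 * X ^ 2 * mk rootedMapCount = _
  linear_combination hTU
end
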